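/- Blichfeldt's gauge inequality: if points c₁, …, c_k in R^n are pairwise at distance at least 2, then for every x ∈ R^n, Σᵢ max(0, 2 − |x − cᵢ|²)/2 ≤ 1. -/

import Mathlib

/-!
Only the centres with `|x - cᵢ|² < 2` contribute; let there be `m` of them. Expanding squares
around `x`, `Σᵢ Σⱼ |cᵢ - cⱼ|² = 2m Σᵢ |x - cᵢ|² - 2 |Σᵢ (cᵢ - x)|² ≤ 2m Σᵢ |x - cᵢ|²`, while
separation bounds the left side below by `4m(m - 1)`. Hence `Σᵢ |x - cᵢ|² ≥ 2(m - 1)`, that is,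
`Σᵢ (2 - |x - cᵢ|²) ≤ 2`.
-/

open Finset RealInnerProductSpace

section InnerProductSpace

variable {E ι : Type*} [NormedAddCommGroup E] [InnerProductSpace ℝ E]

theorem sum_sum_norm_sub_sq (s : Finset ι) (v : ι → E) :
    ∑ i ∈ s, ∑ j ∈ s, ‖v i - v j‖ ^ 2 =
      2 * #s * ∑ i ∈ s, ‖v i‖ ^ 2 - 2 * ‖∑ i ∈ s, v i‖ ^ 2 := by
  have hinner : ∑ i ∈ s, ∑ j ∈ s, ⟪v i, v j⟫ = ‖∑ i ∈ s, v i‖ ^ 2 := by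
    rw [← real_inner_self_eq_norm_sq, sum_inner]
    simp only [inner_sum]
  simp only [norm_sub_sq_real, sum_add_distrib, sum_sub_distrib, sum_const, nsmul_eq_mul,
    ← mul_sum, hinner]
  ring

theorem sum_sum_dist_sq_le (s : Finset ι) (c : ι → E) (x : E) :
    ∑ i ∈ s, ∑ j ∈ s, dist (c i) (c j) ^ 2 ≤ 2 * #s * ∑ i ∈ s, dist x (c i) ^ 2 := by
  have h := sum_sum_norm_sub_sq s (fun i => c i - x)
  simp only [sub_sub_sub_cancel_right, ← dist_eq_norm, dist_comm _ x] at h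
  rw [h]
  linarith [sq_nonneg ‖∑ i ∈ s, (c i - x)‖]

end InnerProductSpace

theorem card_mul_card_sub_one_mul_sq_le_sum_sum_dist_sq {α ι : Type*} [PseudoMetricSpace α]
    [DecidableEq ι] {s : Finset ι} {c : ι → α} {r : ℝ} (hr : 0 ≤ r)
    (hsep : ∀ i ∈ s, ∀ j ∈ s, i ≠ j → r ≤ dist (c i) (c j)) :
    #s * (#s - 1) * r ^ 2 ≤ ∑ i ∈ s, ∑ j ∈ s, dist (c i) (c j) ^ 2 := by
  rw [mul_assoc, ← nsmul_eq_mul]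
  refine card_nsmul_le_sum _ _ _ fun i hi => ?_
  rw [← sum_erase s (a := i) (by simp), ← cast_card_erase_of_mem hi, ← nsmul_eq_mul]
  refine card_nsmul_le_sum _ _ _ fun j hj => ?_
  have := hsep i hi j (mem_of_mem_erase hj) (ne_of_mem_erase hj).symm
  gcongr

theorem sum_two_mul_sq_sub_dist_sq_le {E ι : Type*} [NormedAddCommGroup E]
    [InnerProductSpace ℝ E] [DecidableEq ι] {s : Finset ι} {c : ι → E} {r : ℝ} (hr : 0 ≤ r)
    (hsep : ∀ i ∈ s, ∀ j ∈ s, i ≠ j → 2 * r ≤ dist (c i) (c j)) (x : E) :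
    ∑ i ∈ s, (2 * r ^ 2 - dist x (c i) ^ 2) ≤ 2 * r ^ 2 := by
  rcases s.eq_empty_or_nonempty with rfl | hs
  · simp [sq_nonneg]
  have hlow := card_mul_card_sub_one_mul_sq_le_sum_sum_dist_sq (by positivity) hsep
  have hup := sum_sum_dist_sq_le s c x
  have hcard : (0 : ℝ) < #s := by exact_mod_cast hs.card_pos
  have hsum : 2 * r ^ 2 * (#s - 1) ≤ ∑ i ∈ s, dist x (c i) ^ 2 := by
    refine le_of_mul_le_mul_left ?_ (by positivity : (0 : ℝ) < 2 * #s)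
    nlinarith
  rw [sum_sub_distrib, sum_const, nsmul_eq_mul]
  linarith

theorem sum_max_zero_eq_sum_filter_pos {ι : Type*} (s : Finset ι) (f : ι → ℝ) :
    ∑ i ∈ s, max 0 (f i) = ∑ i ∈ s with 0 < f i, f i := by
  rw [sum_filter]
  refine sum_congr rfl fun i _ => ?_
  split_ifs with h
  · exact max_eq_right h.le
  · exact max_eq_left (not_lt.1 h)

/-- Blichfeldt's gauge inequality: if `c₁, …, c_k` in `ℝ^n` are pairwise at distance at
least `2`, then for every `x`, `Σᵢ max(0, 2 - |x - cᵢ|²)/2 ≤ 1`. -/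
theorem blichfeldt_gauge_inequality (n k : ℕ)
    (c : Fin k → EuclideanSpace ℝ (Fin n))
    (hsep : ∀ i j, i ≠ j → 2 ≤ dist (c i) (c j))
    (x : EuclideanSpace ℝ (Fin n)) :
    ∑ i, max 0 (2 - dist x (c i) ^ 2) / 2 ≤ 1 := by
  calc ∑ i, max 0 (2 - dist x (c i) ^ 2) / 2
      = (∑ i with 0 < 2 - dist x (c i) ^ 2, (2 - dist x (c i) ^ 2)) / 2 := by
        rw [← sum_div, sum_max_zero_eq_sum_filter_pos]
    _ ≤ 2 / 2 := by
        gcongr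
        simpa using sum_two_mul_sq_sub_dist_sq_le zero_le_one
          (by simpa using fun i _ j _ => hsep i j) x
    _ = 1 := div_self two_ne_zero
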